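/- arXiv:1707.05069 — 3 statements merged into one kernel-verified Lean document; each statement's English description precedes it below -/
import Mathlib

section
/- Let M_* be a countably infinite simple ∧-matroid of rank 3 that embeds every finite simple ∧-matroid of rank ≤ 3 and in which every isomorphism between finite substructures extends to an automorphism. Then M_* has the independence property: there exists a first-order formula φ(x̄; ȳ) in the language with one ternary relation symbol R and one 4-ary function symbol ∧ such that for every natural number n there are tuples ā_1, …, ā_n in M_* and, for every subset S ⊆ {1, …, n}, a tuple b̄_S in M_* with M_* ⊨ φ(ā_i; b̄_S) if and only if i ∈ S. -/
namespace PaoliniMatroids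

open Function Set

/-- The "line" through `a` and `b` determined by a ternary collinearity relation `R`:
the set `{a, b} ∪ {x | R a b x}`. -/
def lineOf {V : Type*} (R : V → V → V → Prop) (a b : V) : Set V :=
  {a, b} ∪ {x | R a b x}

/-- A simple ∧-matroid of rank ≤ 3, with domain `carrier` inside the ambient type `V`.
`R` is the ternary dependency (collinearity) relation and `wedge` is the 4-ary
intersection-of-lines function determined by `R`. -/
structure WM (V : Type*) where
  carrier : Set V
  R : V → V → V → Prop
  wedge : V → V → V → V → V
  R_mem : ∀ a b c, R a b c → a ∈ carrier ∧ b ∈ carrier ∧ c ∈ carrier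
  wedge_mem : ∀ a b c d, a ∈ carrier → b ∈ carrier → c ∈ carrier → d ∈ carrier →
      wedge a b c d ∈ carrier
  irrefl : ∀ a b c, R a b c → a ≠ b ∧ a ≠ c ∧ b ≠ c
  symm_swap : ∀ a b c, R a b c → R b a c
  symm_rot : ∀ a b c, R a b c → R b c a
  exchange : ∀ a b c d, R a b c → R a b d → ∀ x y z,
      x ∈ ({a, b, c, d} : Set V) → y ∈ ({a, b, c, d} : Set V) → z ∈ ({a, b, c, d} : Set V) →
      x ≠ y → x ≠ z → y ≠ z → R x y z
  wedge_det : ∀ a b c d, a ∈ carrier → b ∈ carrier → c ∈ carrier → d ∈ carrier →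
      (a ≠ b ∧ c ≠ d ∧ lineOf R a b ≠ lineOf R c d ∧
        wedge a b c d ∈ lineOf R a b ∧ wedge a b c d ∈ lineOf R c d ∧
        wedge a b c d ∉ ({a, b, c, d} : Set V)) ∨
      (wedge a b c d = a ∧ ¬ ∃ p, a ≠ b ∧ c ≠ d ∧ lineOf R a b ≠ lineOf R c d ∧
        p ∈ lineOf R a b ∧ p ∈ lineOf R c d ∧ p ∉ ({a, b, c, d} : Set V))

/-- An embedding of ∧-matroids: an injective map (on the domain) preserving `R`
in both directions and preserving the ∧-function. -/
structure IsEmb {V W : Type*} (M : WM V) (N : WM W) (f : V → W) : Prop where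
  maps : ∀ x ∈ M.carrier, f x ∈ N.carrier
  inj : ∀ x ∈ M.carrier, ∀ y ∈ M.carrier, f x = f y → x = y
  rel : ∀ a ∈ M.carrier, ∀ b ∈ M.carrier, ∀ c ∈ M.carrier,
      (M.R a b c ↔ N.R (f a) (f b) (f c))
  wedge : ∀ a ∈ M.carrier, ∀ b ∈ M.carrier, ∀ c ∈ M.carrier, ∀ d ∈ M.carrier,
      f (M.wedge a b c d) = N.wedge (f a) (f b) (f c) (f d)

/-- An isomorphism of ∧-matroids: an embedding which is onto the target domain. -/
def IsIso {V W : Type*} (M : WM V) (N : WM W) (f : V → W) : Prop :=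
  IsEmb M N f ∧ N.carrier ⊆ f '' M.carrier

/-- `M` is a substructure of `N`: the domain of `M` is a subset of that of `N`
(necessarily closed under the ∧-function of `N`) and `R`, `∧` are induced. -/
structure Sub {V : Type*} (M N : WM V) : Prop where
  sub : M.carrier ⊆ N.carrier
  rel : ∀ a ∈ M.carrier, ∀ b ∈ M.carrier, ∀ c ∈ M.carrier, (M.R a b c ↔ N.R a b c)
  wedge : ∀ a ∈ M.carrier, ∀ b ∈ M.carrier, ∀ c ∈ M.carrier, ∀ d ∈ M.carrier,
      M.wedge a b c d = N.wedge a b c d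

/-- The matroid has rank 3: there are three (pairwise distinct) non-collinear points. -/
def Rank3 {V : Type*} (M : WM V) : Prop :=
  ∃ a ∈ M.carrier, ∃ b ∈ M.carrier, ∃ c ∈ M.carrier,
    a ≠ b ∧ a ≠ c ∧ b ≠ c ∧ ¬ M.R a b c

/-- An automorphism of a ∧-matroid: a bijection of the domain preserving `R` in both
directions and preserving the ∧-function. -/
def IsAut {V : Type*} (M : WM V) (g : V → V) : Prop :=
  Set.BijOn g M.carrier M.carrier ∧
  (∀ a ∈ M.carrier, ∀ b ∈ M.carrier, ∀ c ∈ M.carrier,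
      (M.R a b c ↔ M.R (g a) (g b) (g c))) ∧
  (∀ a ∈ M.carrier, ∀ b ∈ M.carrier, ∀ c ∈ M.carrier, ∀ d ∈ M.carrier,
      g (M.wedge a b c d) = M.wedge (g a) (g b) (g c) (g d))

/-- A projective plane: a point-line incidence system where two distinct points lie on a
unique common line, two distinct lines meet in a unique point, and there are four points
no three of which are collinear. -/
structure ProjPlane where
  Point : Type
  Line : Type
  incid : Point → Line → Prop
  unique_line : ∀ p q : Point, p ≠ q → ∃! l : Line, incid p l ∧ incid q l
  unique_point : ∀ l m : Line, l ≠ m → ∃! p : Point, incid p l ∧ incid p m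
  nondeg : ∃ p₁ p₂ p₃ p₄ : Point, p₁ ≠ p₂ ∧ p₁ ≠ p₃ ∧ p₁ ≠ p₄ ∧ p₂ ≠ p₃ ∧ p₂ ≠ p₄ ∧ p₃ ≠ p₄ ∧
    ∀ l : Line, ¬(incid p₁ l ∧ incid p₂ l ∧ incid p₃ l) ∧
      ¬(incid p₁ l ∧ incid p₂ l ∧ incid p₄ l) ∧
      ¬(incid p₁ l ∧ incid p₃ l ∧ incid p₄ l) ∧
      ¬(incid p₂ l ∧ incid p₃ l ∧ incid p₄ l)

/-- The ternary relation of the simple rank-3 matroid `M_P` associated with a projective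
plane: `R a b c` iff `a, b, c` are pairwise distinct collinear points. -/
def ProjPlane.Rmat (P : ProjPlane) (a b c : P.Point) : Prop :=
  a ≠ b ∧ a ≠ c ∧ b ≠ c ∧ ∃ l : P.Line, P.incid a l ∧ P.incid b l ∧ P.incid c l

/-- `N` omits the matroid `M_P` of the projective plane `P`: no subset of the domain of `N`,
with the induced ternary relation, is isomorphic (as a matroid) to `M_P`. -/
def Omits {V : Type*} (N : WM V) (P : ProjPlane) : Prop :=
  ¬ ∃ e : P.Point → V, Function.Injective e ∧ (∀ p, e p ∈ N.carrier) ∧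
      ∀ a b c, P.Rmat a b c ↔ N.R (e a) (e b) (e c)

/-- The single 4-ary function symbol (for ∧) of the language of simple ∧-matroids. -/
inductive matroidFun : ℕ → Type
  | wedge : matroidFun 4

/-- The single ternary relation symbol (for `R`) of the language of simple ∧-matroids. -/
inductive matroidRel : ℕ → Type
  | dep : matroidRel 3

/-- The first-order language with one ternary relation symbol and one 4-ary function symbol. -/
def matroidLang : FirstOrder.Language := ⟨matroidFun, matroidRel⟩

/-- A simple ∧-matroid with domain the whole ambient type, viewed as a first-order
structure in `matroidLang`. -/
def wmStructure {V : Type*} (M : WM V) : matroidLang.Structure V where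
  funMap | .wedge => fun x => M.wedge (x 0) (x 1) (x 2) (x 3)
  RelMap | .dep => fun x => M.R (x 0) (x 1) (x 2)

open FirstOrder

/-! ### Auxiliary constructions for the proof -/

section Aux

open FirstOrder Language

/-- The term `wedge(x0, x1, y0, y1)` in the matroid language. -/
def wterm : matroidLang.Term (Fin 2 ⊕ Fin 2) :=
  FirstOrder.Language.Term.func (matroidFun.wedge : matroidLang.Functions 4)
    ![FirstOrder.Language.Term.var (Sum.inl 0), FirstOrder.Language.Term.var (Sum.inl 1),
      FirstOrder.Language.Term.var (Sum.inr 0), FirstOrder.Language.Term.var (Sum.inr 1)]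

/-- The formula `R x0 x1 w ∧ R y0 y1 w` where `w = wedge(x0,x1,y0,y1)`:
it says that the lines `x0 ∨ x1` and `y0 ∨ y1` intersect in a new point. -/
def phiIP : matroidLang.Formula (Fin 2 ⊕ Fin 2) :=
  (FirstOrder.Language.Relations.formula (matroidRel.dep : matroidLang.Relations 3)
    ![FirstOrder.Language.Term.var (Sum.inl 0), FirstOrder.Language.Term.var (Sum.inl 1), wterm]) ⊓
  (FirstOrder.Language.Relations.formula (matroidRel.dep : matroidLang.Relations 3)
    ![FirstOrder.Language.Term.var (Sum.inr 0), FirstOrder.Language.Term.var (Sum.inr 1), wterm])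

lemma phiIP_realize {V : Type*} (M : WM V) (v : Fin 2 ⊕ Fin 2 → V) :
    @FirstOrder.Language.Formula.Realize matroidLang V (wmStructure M) _ phiIP v ↔
      (M.R (v (Sum.inl 0)) (v (Sum.inl 1))
          (M.wedge (v (Sum.inl 0)) (v (Sum.inl 1)) (v (Sum.inr 0)) (v (Sum.inr 1))) ∧
       M.R (v (Sum.inr 0)) (v (Sum.inr 1))
          (M.wedge (v (Sum.inl 0)) (v (Sum.inl 1)) (v (Sum.inr 0)) (v (Sum.inr 1)))) := by
  letI : matroidLang.Structure V := wmStructure M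
  simp only [phiIP, wterm, Formula.realize_inf, Formula.realize_rel, Term.realize_func,
    Term.realize_var]
  exact Iff.rfl

lemma lineOf_mem_iff {V : Type*} (R : V → V → V → Prop) (a b x : V) :
    x ∈ lineOf R a b ↔ x = a ∨ x = b ∨ R a b x := by
  simp [lineOf, Set.mem_union, Set.mem_insert_iff, Set.mem_singleton_iff, or_assoc]

open Classical in
/-- A canonical wedge function determined by any ternary relation. -/
noncomputable def wedgeOf {V : Type*} (R : V → V → V → Prop) (a b c d : V) : V :=
  if h : ∃ p, a ≠ b ∧ c ≠ d ∧ lineOf R a b ≠ lineOf R c d ∧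
      p ∈ lineOf R a b ∧ p ∈ lineOf R c d ∧ p ∉ ({a, b, c, d} : Set V) then h.choose else a

lemma wedgeOf_pos {V : Type*} (R : V → V → V → Prop) {a b c d : V}
    (h : ∃ p, a ≠ b ∧ c ≠ d ∧ lineOf R a b ≠ lineOf R c d ∧
      p ∈ lineOf R a b ∧ p ∈ lineOf R c d ∧ p ∉ ({a, b, c, d} : Set V)) :
    a ≠ b ∧ c ≠ d ∧ lineOf R a b ≠ lineOf R c d ∧
      wedgeOf R a b c d ∈ lineOf R a b ∧ wedgeOf R a b c d ∈ lineOf R c d ∧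
      wedgeOf R a b c d ∉ ({a, b, c, d} : Set V) := by
  classical
  rw [wedgeOf, dif_pos h]
  exact h.choose_spec

lemma wedgeOf_neg {V : Type*} (R : V → V → V → Prop) {a b c d : V}
    (h : ¬ ∃ p, a ≠ b ∧ c ≠ d ∧ lineOf R a b ≠ lineOf R c d ∧
      p ∈ lineOf R a b ∧ p ∈ lineOf R c d ∧ p ∉ ({a, b, c, d} : Set V)) :
    wedgeOf R a b c d = a := by
  classical
  rw [wedgeOf, dif_neg h]

/-- Points of the finite configuration witnessing IP at level `n`:
two points `x i k` for each of `n` lines `ℓ i`, two points `y S k` for each of the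
lines `m S` (`S ⊆ Fin n`), and a point `p i S` for each pair. -/
abbrev IPPt (n : ℕ) : Type := (Fin n × Fin 2) ⊕ (Set (Fin n) × Fin 2) ⊕ (Fin n × Set (Fin n))

/-- Labels for the lines of the configuration. -/
abbrev IPLab (n : ℕ) : Type := Fin n ⊕ Set (Fin n)

/-- Incidence: `x i k` lies on `ℓ i`, `y S k` lies on `m S`, and `p i S` lies on both
`ℓ i` and `m S` when `i ∈ S` (and on no line otherwise). -/
def ipIncid {n : ℕ} : IPPt n → IPLab n → Prop
  | Sum.inl (i, _), l => l = Sum.inl i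
  | Sum.inr (Sum.inl (S, _)), l => l = Sum.inr S
  | Sum.inr (Sum.inr (i, S)), l => i ∈ S ∧ (l = Sum.inl i ∨ l = Sum.inr S)

/-- Collinearity: three pairwise distinct points on a common line. -/
def ipR {n : ℕ} (a b c : IPPt n) : Prop :=
  a ≠ b ∧ a ≠ c ∧ b ≠ c ∧ ∃ l, ipIncid a l ∧ ipIncid b l ∧ ipIncid c l

lemma ipIncid_unique {n : ℕ} {a b : IPPt n} {l l' : IPLab n} (hab : a ≠ b)
    (hal : ipIncid a l) (hbl : ipIncid b l) (hal' : ipIncid a l') (hbl' : ipIncid b l') :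
    l = l' := by
  match a, b with
  | Sum.inl (i, k), b =>
    simp only [ipIncid] at hal hal'; rw [hal, hal']
  | Sum.inr (Sum.inl (S, k)), b =>
    simp only [ipIncid] at hal hal'; rw [hal, hal']
  | Sum.inr (Sum.inr (i, S)), Sum.inl (j, k) =>
    simp only [ipIncid] at hbl hbl'; rw [hbl, hbl']
  | Sum.inr (Sum.inr (i, S)), Sum.inr (Sum.inl (T, k)) =>
    simp only [ipIncid] at hbl hbl'; rw [hbl, hbl']
  | Sum.inr (Sum.inr (i, S)), Sum.inr (Sum.inr (j, T)) =>
    simp only [ipIncid] at hal hbl hal' hbl'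
    obtain ⟨hiS, h1⟩ := hal
    obtain ⟨hjT, h2⟩ := hbl
    obtain ⟨-, h3⟩ := hal'
    obtain ⟨-, h4⟩ := hbl'
    rcases h1 with rfl | rfl <;> rcases h3 with rfl | rfl <;> simp_all

/-- The finite simple ∧-matroid of rank ≤ 3 witnessing IP at level `n`. -/
noncomputable def ipWM (n : ℕ) : WM (IPPt n) where
  carrier := Set.univ
  R := ipR
  wedge := wedgeOf ipR
  R_mem := fun _ _ _ _ => ⟨trivial, trivial, trivial⟩
  wedge_mem := fun _ _ _ _ _ _ _ _ => trivial
  irrefl := fun _ _ _ h => ⟨h.1, h.2.1, h.2.2.1⟩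
  symm_swap := fun _ _ _ ⟨h1, h2, h3, l, ha, hb, hc⟩ => ⟨Ne.symm h1, h3, h2, l, hb, ha, hc⟩
  symm_rot := fun _ _ _ ⟨h1, h2, h3, l, ha, hb, hc⟩ =>
    ⟨h3, Ne.symm h1, Ne.symm h2, l, hb, hc, ha⟩
  exchange := by
    rintro a b c d ⟨hab, -, -, l, ha, hb, hc⟩ ⟨-, -, -, l', ha', hb', hd⟩ x y z hx hy hz hxy hxz hyz
    obtain rfl : l = l' := ipIncid_unique hab ha hb ha' hb'
    have key : ∀ w ∈ ({a, b, c, d} : Set (IPPt _)), ipIncid w l := by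
      intro w hw
      simp only [Set.mem_insert_iff, Set.mem_singleton_iff] at hw
      rcases hw with rfl | rfl | rfl | rfl
      exacts [ha, hb, hc, hd]
    exact ⟨hxy, hxz, hyz, l, key x hx, key y hy, key z hz⟩
  wedge_det := by
    intro a b c d _ _ _ _
    by_cases h : ∃ p, a ≠ b ∧ c ≠ d ∧ lineOf ipR a b ≠ lineOf ipR c d ∧
        p ∈ lineOf ipR a b ∧ p ∈ lineOf ipR c d ∧ p ∉ ({a, b, c, d} : Set (IPPt _))
    · exact Or.inl (wedgeOf_pos ipR h)
    · exact Or.inr ⟨wedgeOf_neg ipR h, h⟩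

lemma ipWM_R (n : ℕ) : (ipWM n).R = ipR := rfl
lemma ipWM_wedge (n : ℕ) : (ipWM n).wedge = wedgeOf ipR := rfl

variable {n : ℕ}

lemma ip_not_R_xxy (i : Fin n) (S : Set (Fin n)) (k k' k'' : Fin 2) :
    ¬ ipR (Sum.inl (i, k)) (Sum.inl (i, k')) (Sum.inr (Sum.inl (S, k''))) := by
  rintro ⟨-, -, -, l, h1, -, h3⟩
  simp only [ipIncid] at h1 h3
  exact absurd (h1.symm.trans h3) (by simp)

lemma ip_lines_ne (i : Fin n) (S : Set (Fin n)) :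
    lineOf (ipR (n := n)) (Sum.inl (i, 0)) (Sum.inl (i, 1)) ≠
      lineOf ipR (Sum.inr (Sum.inl (S, 0))) (Sum.inr (Sum.inl (S, 1))) := by
  intro h
  have hy : (Sum.inr (Sum.inl (S, 0)) : IPPt n) ∈
      lineOf ipR (Sum.inl (i, 0)) (Sum.inl (i, 1)) := by
    rw [h, lineOf_mem_iff]
    exact Or.inl rfl
  rw [lineOf_mem_iff] at hy
  rcases hy with h' | h' | h'
  · simp at h'
  · simp at h'
  · exact ip_not_R_xxy i S 0 1 0 h'

lemma ip_R_xxp (i : Fin n) {S : Set (Fin n)} (hiS : i ∈ S) :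
    ipR (Sum.inl (i, 0)) (Sum.inl (i, 1)) (Sum.inr (Sum.inr (i, S))) := by
  refine ⟨by simp, by simp, by simp, Sum.inl i, ?_, ?_, ?_⟩ <;> simp [ipIncid, hiS]

lemma ip_R_yyp (i : Fin n) {S : Set (Fin n)} (hiS : i ∈ S) :
    ipR (Sum.inr (Sum.inl (S, 0))) (Sum.inr (Sum.inl (S, 1))) (Sum.inr (Sum.inr (i, S))) := by
  refine ⟨by simp, by simp, by simp, Sum.inr S, ?_, ?_, ?_⟩ <;> simp [ipIncid, hiS]

lemma ip_exists (i : Fin n) {S : Set (Fin n)} (hiS : i ∈ S) :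
    ∃ p : IPPt n, (Sum.inl (i, 0) : IPPt n) ≠ Sum.inl (i, 1) ∧
      (Sum.inr (Sum.inl (S, 0)) : IPPt n) ≠ Sum.inr (Sum.inl (S, 1)) ∧
      lineOf ipR (Sum.inl (i, 0)) (Sum.inl (i, 1)) ≠
        lineOf ipR (Sum.inr (Sum.inl (S, 0))) (Sum.inr (Sum.inl (S, 1))) ∧
      p ∈ lineOf ipR (Sum.inl (i, 0)) (Sum.inl (i, 1)) ∧
      p ∈ lineOf ipR (Sum.inr (Sum.inl (S, 0))) (Sum.inr (Sum.inl (S, 1))) ∧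
      p ∉ ({Sum.inl (i, 0), Sum.inl (i, 1), Sum.inr (Sum.inl (S, 0)),
        Sum.inr (Sum.inl (S, 1))} : Set (IPPt n)) := by
  refine ⟨Sum.inr (Sum.inr (i, S)), by simp, by simp, ip_lines_ne i S, ?_, ?_, by simp⟩
  · rw [lineOf_mem_iff]; exact Or.inr (Or.inr (ip_R_xxp i hiS))
  · rw [lineOf_mem_iff]; exact Or.inr (Or.inr (ip_R_yyp i hiS))

lemma ip_not_exists (i : Fin n) {S : Set (Fin n)} (hiS : i ∉ S) :
    ¬ ∃ p : IPPt n, (Sum.inl (i, 0) : IPPt n) ≠ Sum.inl (i, 1) ∧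
      (Sum.inr (Sum.inl (S, 0)) : IPPt n) ≠ Sum.inr (Sum.inl (S, 1)) ∧
      lineOf ipR (Sum.inl (i, 0)) (Sum.inl (i, 1)) ≠
        lineOf ipR (Sum.inr (Sum.inl (S, 0))) (Sum.inr (Sum.inl (S, 1))) ∧
      p ∈ lineOf ipR (Sum.inl (i, 0)) (Sum.inl (i, 1)) ∧
      p ∈ lineOf ipR (Sum.inr (Sum.inl (S, 0))) (Sum.inr (Sum.inl (S, 1))) ∧
      p ∉ ({Sum.inl (i, 0), Sum.inl (i, 1), Sum.inr (Sum.inl (S, 0)),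
        Sum.inr (Sum.inl (S, 1))} : Set (IPPt n)) := by
  rintro ⟨p, -, -, -, hp1, hp2, hp4⟩
  simp only [Set.mem_insert_iff, Set.mem_singleton_iff, not_or] at hp4
  obtain ⟨hpx1, hpx2, hpy1, hpy2⟩ := hp4
  rw [lineOf_mem_iff] at hp1 hp2
  rcases hp1 with h | h | h
  · exact hpx1 h
  · exact hpx2 h
  rcases hp2 with h' | h' | h'
  · exact hpy1 h'
  · exact hpy2 h'
  obtain ⟨-, -, -, l, hl1, -, hl3⟩ := h
  obtain ⟨-, -, -, l', hl1', -, hl3'⟩ := h'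
  simp only [ipIncid] at hl1 hl1'
  subst hl1; subst hl1'
  match p, hl3, hl3' with
  | Sum.inl (j, k), hl3, hl3' => simp [ipIncid] at hl3'
  | Sum.inr (Sum.inl (T, k)), hl3, hl3' => simp [ipIncid] at hl3
  | Sum.inr (Sum.inr (j, T)), hl3, hl3' =>
    obtain ⟨hjT, hca⟩ := hl3
    obtain ⟨-, hcb⟩ := hl3'
    rcases hca with h | h
    · rcases hcb with h' | h'
      · simp at h'
      · obtain rfl : i = j := by simpa using h
        obtain rfl : S = T := by simpa using h'
        exact hiS hjT
    · simp at h

end Aux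


/-- the universal homogeneous simple ∧-matroid of rank 3 has the
independence property. -/
theorem independence_property (V : Type) [Countable V] [Infinite V] (M : WM V)
    (hcar : M.carrier = Set.univ) (hrk : Rank3 M)
    (hembed : ∀ (W : Type) (N : WM W), N.carrier.Finite → ∃ f : W → V, IsEmb N M f)
    (hhom : ∀ A B : WM V, Sub A M → Sub B M → A.carrier.Finite → B.carrier.Finite →
      ∀ f : V → V, IsIso A B f →
        ∃ g : V → V, IsAut M g ∧ ∀ x ∈ A.carrier, g x = f x) :
    letI : matroidLang.Structure V := wmStructure M
    ∃ (k m : ℕ) (φ : matroidLang.Formula (Fin k ⊕ Fin m)),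
      ∀ n : ℕ, ∃ a : Fin n → Fin k → V, ∀ S : Set (Fin n), ∃ b : Fin m → V,
        ∀ i : Fin n, φ.Realize (Sum.elim (a i) b) ↔ i ∈ S := by
  letI : matroidLang.Structure V := wmStructure M
  refine ⟨2, 2, phiIP, fun n => ?_⟩
  obtain ⟨f, hf⟩ := hembed (IPPt n) (ipWM n) Set.finite_univ
  have hmem : ∀ w : IPPt n, w ∈ (ipWM n).carrier := fun w => Set.mem_univ w
  refine ⟨fun i k => f (Sum.inl (i, k)), fun S => ⟨fun k => f (Sum.inr (Sum.inl (S, k))), fun i => ?_⟩⟩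
  have hx1 : (Sum.elim (fun k => f (Sum.inl (i, k))) (fun k => f (Sum.inr (Sum.inl (S, k)))) :
      Fin 2 ⊕ Fin 2 → V) = fun v => f (Sum.elim (fun k => Sum.inl (i, k))
        (fun k => Sum.inr (Sum.inl (S, k))) v) := by
    funext v; cases v <;> rfl
  refine Iff.trans (phiIP_realize M _) ?_
  simp only [Sum.elim_inl, Sum.elim_inr]
  have hw : M.wedge (f (Sum.inl (i, 0))) (f (Sum.inl (i, 1))) (f (Sum.inr (Sum.inl (S, 0))))
      (f (Sum.inr (Sum.inl (S, 1)))) =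
      f (wedgeOf ipR (Sum.inl (i, 0)) (Sum.inl (i, 1)) (Sum.inr (Sum.inl (S, 0)))
        (Sum.inr (Sum.inl (S, 1)))) :=
    (hf.wedge _ (hmem _) _ (hmem _) _ (hmem _) _ (hmem _)).symm
  rw [hw]
  by_cases hiS : i ∈ S
  · simp only [hiS, iff_true]
    obtain ⟨-, -, -, hw1, hw2, hw4⟩ := wedgeOf_pos (ipR (n := n)) (ip_exists i hiS)
    simp only [Set.mem_insert_iff, Set.mem_singleton_iff, not_or] at hw4
    obtain ⟨h1, h2, h3, h4⟩ := hw4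
    rw [lineOf_mem_iff] at hw1 hw2
    rcases hw1 with h | h | h
    · exact absurd h h1
    · exact absurd h h2
    rcases hw2 with h' | h' | h'
    · exact absurd h' h3
    · exact absurd h' h4
    exact ⟨(hf.rel _ (hmem _) _ (hmem _) _ (hmem _)).mp h,
      (hf.rel _ (hmem _) _ (hmem _) _ (hmem _)).mp h'⟩
  · simp only [hiS, iff_false]
    rw [wedgeOf_neg (ipR (n := n)) (ip_not_exists i hiS)]
    rintro ⟨hcon, -⟩
    have := ((hf.rel _ (hmem _) _ (hmem _) _ (hmem _)).mpr hcon).2.1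
    exact this rfl
end PaoliniMatroids
end

section
/- Let M_* be a countably infinite simple ∧-matroid of rank 3 that embeds every finite simple ∧-matroid of rank ≤ 3 and in which every isomorphism between finite substructures extends to an automorphism. If f is a bijection of the domain of M_* such that conjugation by f is an automorphism of the group Aut(M_*) (that is, g ↦ f ∘ g ∘ f⁻¹ maps Aut(M_*) into Aut(M_*) and g ↦ f⁻¹ ∘ g ∘ f maps Aut(M_*) into Aut(M_*)), then f ∈ Aut(M_*). -/
namespace PaoliniMatroids

open Function Set

section Helpers

variable {V : Type*}

lemma mem_lineOf {R : V → V → V → Prop} {a b u : V} :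
    u ∈ lineOf R a b ↔ u = a ∨ u = b ∨ R a b u := by
  simp [lineOf, Set.mem_insert_iff, or_assoc]

lemma r_perm (M : WM V) {a b c : V} (h : M.R a b c) :
    M.R a c b ∧ M.R b a c ∧ M.R b c a ∧ M.R c a b ∧ M.R c b a := by
  have h1 := M.symm_rot _ _ _ h
  have h2 := M.symm_rot _ _ _ h1
  exact ⟨M.symm_swap _ _ _ h2, M.symm_swap _ _ _ h, h1, h2, M.symm_swap _ _ _ h1⟩

/-- Transitivity of collinearity: points of the line through two points of a line. -/
lemma col_trans (M : WM V) {x y p q u : V} (hxy : x ≠ y) (hpq : p ≠ q)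
    (hp : p ∈ lineOf M.R x y) (hq : q ∈ lineOf M.R x y) (hu : u ∈ lineOf M.R p q) :
    u ∈ lineOf M.R x y := by
  rw [mem_lineOf] at hp hq hu ⊢
  by_cases hux : u = x
  · exact Or.inl hux
  by_cases huy : u = y
  · exact Or.inr (Or.inl huy)
  rcases hu with rfl | rfl | hu
  · exact hp
  · exact hq
  have hxu : x ≠ u := fun h => hux h.symm
  have hyu : y ≠ u := fun h => huy h.symm
  have hpu : p ≠ u := (M.irrefl _ _ _ hu).2.1
  have hqu : q ≠ u := (M.irrefl _ _ _ hu).2.2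
  refine Or.inr (Or.inr ?_)
  rcases hp with hp | hp | hp
  · rcases hq with hq | hq | hq
    · exact absurd (hp.trans hq.symm) hpq
    · rw [hp, hq] at hu; exact hu
    · rw [hp] at hu
      exact M.exchange x q y u (r_perm M hq).1 hu x y u (by simp) (by simp) (by simp)
        hxy hxu hyu
  · rcases hq with hq | hq | hq
    · rw [hp, hq] at hu; exact (r_perm M hu).2.1
    · exact absurd (hp.trans hq.symm) hpq
    · rw [hp] at hu
      exact M.exchange y q x u (r_perm M hq).2.2.1 hu x y u (by simp) (by simp) (by simp)
        hxy hxu hyu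
  · rcases hq with hq | hq | hq
    · rw [hq] at hu
      exact M.exchange p x y u (r_perm M hp).2.2.2.1 hu x y u (by simp) (by simp) (by simp)
        hxy hxu hyu
    · rw [hq] at hu
      exact M.exchange p y x u (r_perm M hp).2.2.2.2 hu x y u (by simp) (by simp) (by simp)
        hxy hxu hyu
    · have hpx : x ≠ p := (M.irrefl _ _ _ hp).2.1
      have hqx : x ≠ q := (M.irrefl _ _ _ hq).2.1
      have h1 : M.R p q x := M.exchange x y p q hp hq p q x (by simp) (by simp) (by simp)
        hpq hpx.symm hqx.symm
      have h2 : M.R x q u := M.exchange p q x u h1 hu x q u (by simp) (by simp) (by simp)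
        hqx hxu hqu
      exact M.exchange x q u y h2 (r_perm M hq).1 x y u (by simp) (by simp) (by simp)
        hxy hxu hyu

lemma lineOf_comm (M : WM V) (a b : V) : lineOf M.R a b = lineOf M.R b a := by
  ext u
  rw [mem_lineOf, mem_lineOf]
  constructor
  · rintro (h | h | h)
    · exact Or.inr (Or.inl h)
    · exact Or.inl h
    · exact Or.inr (Or.inr (M.symm_swap _ _ _ h))
  · rintro (h | h | h)
    · exact Or.inr (Or.inl h)
    · exact Or.inl h
    · exact Or.inr (Or.inr (M.symm_swap _ _ _ h))

lemma base_mem (M : WM V) {x y p q : V} (hxy : x ≠ y) (hpq : p ≠ q)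
    (hp : p ∈ lineOf M.R x y) (hq : q ∈ lineOf M.R x y) : x ∈ lineOf M.R p q := by
  rw [mem_lineOf] at hp hq ⊢
  rcases hp with hp | hp | hp
  · exact Or.inl hp.symm
  · rcases hq with hq | hq | hq
    · exact Or.inr (Or.inl hq.symm)
    · exact absurd (hp.trans hq.symm) hpq
    · rw [hp]; exact Or.inr (Or.inr ((r_perm M hq).2.2.1))
  · rcases hq with hq | hq | hq
    · exact Or.inr (Or.inl hq.symm)
    · rw [hq]; exact Or.inr (Or.inr ((r_perm M hp).2.2.2.2))
    · have hpx : x ≠ p := (M.irrefl _ _ _ hp).2.1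
      have hqx : x ≠ q := (M.irrefl _ _ _ hq).2.1
      exact Or.inr (Or.inr (M.exchange x y p q hp hq p q x (by simp) (by simp) (by simp)
        hpq hpx.symm hqx.symm))

lemma line_eq (M : WM V) {x y p q : V} (hxy : x ≠ y) (hpq : p ≠ q)
    (hp : p ∈ lineOf M.R x y) (hq : q ∈ lineOf M.R x y) :
    lineOf M.R x y = lineOf M.R p q := by
  have hx : x ∈ lineOf M.R p q := base_mem M hxy hpq hp hq
  have hy : y ∈ lineOf M.R p q := by
    rw [lineOf_comm] at hp hq
    exact base_mem M (Ne.symm hxy) hpq hp hq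
  ext u
  constructor
  · intro hu; exact col_trans M hpq hxy hx hy hu
  · intro hu; exact col_trans M hxy hpq hp hq hu

lemma line_unique (M : WM V) {x y z w p q : V} (hxy : x ≠ y) (hzw : z ≠ w) (hpq : p ≠ q)
    (hp1 : p ∈ lineOf M.R x y) (hq1 : q ∈ lineOf M.R x y)
    (hp2 : p ∈ lineOf M.R z w) (hq2 : q ∈ lineOf M.R z w) :
    lineOf M.R x y = lineOf M.R z w :=
  (line_eq M hxy hpq hp1 hq1).trans (line_eq M hzw hpq hp2 hq2).symm

lemma mem3_common {a b c x y z w : V} (hx : x ∈ ({a, b, c} : Set V))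
    (hy : y ∈ ({a, b, c} : Set V)) (hz : z ∈ ({a, b, c} : Set V))
    (hw : w ∈ ({a, b, c} : Set V)) (hxy : x ≠ y) (hzw : z ≠ w) :
    x = z ∨ x = w ∨ y = z ∨ y = w := by
  simp only [Set.mem_insert_iff, Set.mem_singleton_iff] at hx hy hz hw
  rcases hx with rfl | rfl | rfl <;> rcases hy with rfl | rfl | rfl <;>
    rcases hz with rfl | rfl | rfl <;> rcases hw with rfl | rfl | rfl <;> tauto

/-- On a subset of size ≤ 3, the wedge of `M` is the first-argument function. -/
lemma wedge_triple (M : WM V) (hcar : M.carrier = Set.univ) {a b c x y z w : V}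
    (hx : x ∈ ({a, b, c} : Set V)) (hy : y ∈ ({a, b, c} : Set V))
    (hz : z ∈ ({a, b, c} : Set V)) (hw : w ∈ ({a, b, c} : Set V)) :
    M.wedge x y z w = x := by
  have hmem : ∀ v : V, v ∈ M.carrier := by rw [hcar]; exact fun v => trivial
  rcases M.wedge_det x y z w (hmem x) (hmem y) (hmem z) (hmem w) with
    ⟨hxy, hzw, hne, h1, h2, h3⟩ | ⟨h, _⟩
  · exfalso
    simp only [Set.mem_insert_iff, Set.mem_singleton_iff, not_or] at h3
    obtain ⟨hpx, hpy, hpz, hpw⟩ := h3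
    have hs := mem3_common hx hy hz hw hxy hzw
    rcases hs with hs | hs | hs | hs
    · exact hne (line_unique M hxy hzw hpx h1
        (by rw [mem_lineOf]; exact Or.inl rfl) h2
        (by rw [mem_lineOf]; exact Or.inl hs))
    · exact hne (line_unique M hxy hzw hpx h1
        (by rw [mem_lineOf]; exact Or.inl rfl) h2
        (by rw [mem_lineOf]; exact Or.inr (Or.inl hs)))
    · exact hne (line_unique M hxy hzw hpy h1
        (by rw [mem_lineOf]; exact Or.inr (Or.inl rfl)) h2
        (by rw [mem_lineOf]; exact Or.inl hs))
    · exact hne (line_unique M hxy hzw hpy h1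
        (by rw [mem_lineOf]; exact Or.inr (Or.inl rfl)) h2
        (by rw [mem_lineOf]; exact Or.inr (Or.inl hs)))
  · exact h

end Helpers


/-- The collinearity relation on four points `0,1,2,3` in which `{0,1,2}` is the
only line with three points. -/
def R4 : Fin 4 → Fin 4 → Fin 4 → Prop := fun a b c =>
  a ≠ b ∧ a ≠ c ∧ b ≠ c ∧ a ≠ 3 ∧ b ≠ 3 ∧ c ≠ 3

instance : DecidablePred fun p : Fin 4 × Fin 4 × Fin 4 => R4 p.1 p.2.1 p.2.2 := by
  intro p; unfold R4; infer_instance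

instance R4dec (a b c : Fin 4) : Decidable (R4 a b c) := by unfold R4; infer_instance

lemma R4_swap : ∀ a b u : Fin 4, R4 a b u ↔ R4 b a u := by decide

lemma lineOfR4_comm (a b : Fin 4) : lineOf R4 a b = lineOf R4 b a := by
  ext u
  rw [mem_lineOf, mem_lineOf, R4_swap]
  tauto

/-- The four-point ∧-matroid in which `0,1,2` is the unique nontrivial line. -/
def fourWM : WM (Fin 4) where
  carrier := Set.univ
  R := R4
  wedge := fun a _ _ _ => a
  R_mem := fun _ _ _ _ => ⟨trivial, trivial, trivial⟩
  wedge_mem := fun _ _ _ _ _ _ _ _ => trivial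
  irrefl := fun _ _ _ h => ⟨h.1, h.2.1, h.2.2.1⟩
  symm_swap := by decide
  symm_rot := by decide
  exchange := by
    have key : ∀ a b c d x y z : Fin 4, R4 a b c → R4 a b d →
        (x = a ∨ x = b ∨ x = c ∨ x = d) → (y = a ∨ y = b ∨ y = c ∨ y = d) →
        (z = a ∨ z = b ∨ z = c ∨ z = d) → x ≠ y → x ≠ z → y ≠ z → R4 x y z := by decide
    intro a b c d h1 h2 x y z hx hy hz hxy hxz hyz
    simp only [Set.mem_insert_iff, Set.mem_singleton_iff] at hx hy hz
    exact key a b c d x y z h1 h2 hx hy hz hxy hxz hyz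
  wedge_det := by
    have key : ∀ a b c d p : Fin 4, R4 a b p → R4 c d p →
        p ≠ a → p ≠ b → p ≠ c → p ≠ d → (a = c ∧ b = d) ∨ (a = d ∧ b = c) := by decide
    intro a b c d _ _ _ _
    refine Or.inr ⟨rfl, ?_⟩
    rintro ⟨p, hab, hcd, hne, hp1, hp2, hp3⟩
    simp only [Set.mem_insert_iff, Set.mem_singleton_iff, not_or] at hp3
    obtain ⟨hpa, hpb, hpc, hpd⟩ := hp3
    rw [mem_lineOf] at hp1 hp2
    rcases hp1 with h | h | h1; · exact hpa h
    · exact hpb h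
    rcases hp2 with h | h | h2; · exact hpc h
    · exact hpd h
    rcases key a b c d p h1 h2 hpa hpb hpc hpd with ⟨rfl, rfl⟩ | ⟨rfl, rfl⟩
    · exact hne rfl
    · exact hne (lineOfR4_comm a b)

lemma R4_012 : fourWM.R 0 1 2 := show R4 0 1 2 by decide
lemma R4_013 : ¬ fourWM.R 0 1 3 := show ¬ R4 0 1 3 by decide
lemma R4_023 : ¬ fourWM.R 0 2 3 := show ¬ R4 0 2 3 by decide


lemma lineOf_comm' {R : V → V → V → Prop} {a b : V} (hs : ∀ u, R a b u ↔ R b a u) :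
    lineOf R a b = lineOf R b a := by
  ext u
  rw [mem_lineOf, mem_lineOf, hs]
  tauto

lemma three_distinct {a b c x y p : V} (hx : x ∈ ({a, b, c} : Set V))
    (hy : y ∈ ({a, b, c} : Set V)) (hp : p ∈ ({a, b, c} : Set V))
    (hxy : x ≠ y) (hxp : x ≠ p) (hyp : y ≠ p) :
    ∀ z ∈ ({a, b, c} : Set V), z = x ∨ z = y ∨ z = p := by
  intro z hz
  simp only [Set.mem_insert_iff, Set.mem_singleton_iff] at hx hy hp hz
  rcases hx with rfl | rfl | rfl <;> rcases hy with rfl | rfl | rfl <;>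
    rcases hp with rfl | rfl | rfl <;> rcases hz with rfl | rfl | rfl <;> tauto

/-- The induced ∧-matroid on a three-element subset `{a, b, c}`. -/
def tripleWM (M : WM V) (a b c : V) : WM V where
  carrier := {a, b, c}
  R := fun x y z => x ∈ ({a, b, c} : Set V) ∧ y ∈ ({a, b, c} : Set V) ∧
    z ∈ ({a, b, c} : Set V) ∧ M.R x y z
  wedge := fun x _ _ _ => x
  R_mem := fun _ _ _ h => ⟨h.1, h.2.1, h.2.2.1⟩
  wedge_mem := fun _ _ _ _ hx _ _ _ => hx
  irrefl := fun x y z h => M.irrefl x y z h.2.2.2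
  symm_swap := fun _ _ _ h => ⟨h.2.1, h.1, h.2.2.1, M.symm_swap _ _ _ h.2.2.2⟩
  symm_rot := fun _ _ _ h => ⟨h.2.1, h.2.2.1, h.1, M.symm_rot _ _ _ h.2.2.2⟩
  exchange := by
    intro p q r s h1 h2 x y z hx hy hz hxy hxz hyz
    have mem : ∀ t, t ∈ ({p, q, r, s} : Set V) → t ∈ ({a, b, c} : Set V) := by
      intro t ht
      simp only [Set.mem_insert_iff, Set.mem_singleton_iff] at ht
      rcases ht with rfl | rfl | rfl | rfl
      · exact h1.1
      · exact h1.2.1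
      · exact h1.2.2.1
      · exact h2.2.2.1
    exact ⟨mem x hx, mem y hy, mem z hz,
      M.exchange p q r s h1.2.2.2 h2.2.2.2 x y z hx hy hz hxy hxz hyz⟩
  wedge_det := by
    intro x y z w hx hy hz hw
    refine Or.inr ⟨rfl, ?_⟩
    rintro ⟨p, hxy2, hzw2, hne, hp1, hp2, hp3⟩
    rw [mem_lineOf] at hp1 hp2
    simp only [Set.mem_insert_iff, Set.mem_singleton_iff, not_or] at hp3
    obtain ⟨hpx, hpy, hpz, hpw⟩ := hp3
    rcases hp1 with h | h | h1
    · exact hpx h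
    · exact hpy h
    rcases hp2 with h | h | h2
    · exact hpz h
    · exact hpw h
    have hpS : p ∈ ({a, b, c} : Set V) := h1.2.2.1
    have hRzwp := h2.2.2.2
    have hzp : z ≠ p := (M.irrefl _ _ _ hRzwp).2.1
    have hwp : w ≠ p := (M.irrefl _ _ _ hRzwp).2.2
    have key := three_distinct hx hy hpS hxy2 (fun h => hpx h.symm) (fun h => hpy h.symm)
    have hz3 := key z hz
    have hw3 := key w hw
    have hcase : (z = x ∧ w = y) ∨ (z = y ∧ w = x) := by
      rcases hz3 with hz1 | hz1 | hz1 <;> rcases hw3 with hw1 | hw1 | hw1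
      · exact absurd (hz1.trans hw1.symm) hzw2
      · exact Or.inl ⟨hz1, hw1⟩
      · exact absurd hw1 hwp
      · exact Or.inr ⟨hz1, hw1⟩
      · exact absurd (hz1.trans hw1.symm) hzw2
      · exact absurd hw1 hwp
      · exact absurd hz1 hzp
      · exact absurd hz1 hzp
      · exact absurd hz1 hzp
    rcases hcase with ⟨hz1, hw1⟩ | ⟨hz1, hw1⟩
    · rw [hz1, hw1] at hne; exact hne rfl
    · rw [hz1, hw1] at hne
      exact hne (lineOf_comm' (fun u => ⟨fun h => ⟨h.2.1, h.1, h.2.2.1, M.symm_swap _ _ _ h.2.2.2⟩,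
        fun h => ⟨h.2.1, h.1, h.2.2.1, M.symm_swap _ _ _ h.2.2.2⟩⟩))

lemma tripleSub (M : WM V) (hcar : M.carrier = Set.univ) (a b c : V) :
    Sub (tripleWM M a b c) M where
  sub := by rw [hcar]; exact Set.subset_univ _
  rel := fun x hx y hy z hz =>
    ⟨fun h => h.2.2.2, fun h => ⟨hx, hy, hz, h⟩⟩
  wedge := fun x hx y hy z hz w hw => (wedge_triple M hcar hx hy hz hw).symm

/-- A triple in a 3-element set which is collinear set-wise is `R`-related iff distinct. -/
lemma R_sub (M : WM V) {a b c x y z : V} (h : M.R a b c)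
    (hx : x ∈ ({a, b, c} : Set V)) (hy : y ∈ ({a, b, c} : Set V))
    (hz : z ∈ ({a, b, c} : Set V)) (hxy : x ≠ y) (hxz : x ≠ z) (hyz : y ≠ z) :
    M.R x y z := by
  obtain ⟨h1, h2, h3, h4, h5⟩ := r_perm M h
  simp only [Set.mem_insert_iff, Set.mem_singleton_iff] at hx hy hz
  rcases hx with rfl | rfl | rfl <;> rcases hy with rfl | rfl | rfl <;>
    rcases hz with rfl | rfl | rfl <;>
    first
      | exact absurd rfl hxy
      | exact absurd rfl hxz
      | exact absurd rfl hyz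
      | exact h | exact h1 | exact h2 | exact h3 | exact h4 | exact h5

lemma mem_rev {a b c x y z : V} (hab : a ≠ b) (hac : a ≠ c) (hbc : b ≠ c)
    (hx : x ∈ ({a, b, c} : Set V)) (hy : y ∈ ({a, b, c} : Set V))
    (hz : z ∈ ({a, b, c} : Set V)) (hxy : x ≠ y) (hxz : x ≠ z) (hyz : y ≠ z) :
    a ∈ ({x, y, z} : Set V) ∧ b ∈ ({x, y, z} : Set V) ∧ c ∈ ({x, y, z} : Set V) := by
  simp only [Set.mem_insert_iff, Set.mem_singleton_iff] at hx hy hz ⊢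
  rcases hx with rfl | rfl | rfl <;> rcases hy with rfl | rfl | rfl <;>
    rcases hz with rfl | rfl | rfl <;> tauto


/-- Homogeneity gives an automorphism carrying any triple to any other triple of
the same collinearity type. -/
lemma sameOrbitPerm {V : Type} (M : WM V) (hcar : M.carrier = Set.univ)
    (hhom : ∀ A B : WM V, Sub A M → Sub B M → A.carrier.Finite → B.carrier.Finite →
      ∀ f : V → V, IsIso A B f →
        ∃ g : V → V, IsAut M g ∧ ∀ x ∈ A.carrier, g x = f x)
    {a b c a' b' c' : V} (hab : a ≠ b) (hac : a ≠ c) (hbc : b ≠ c)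
    (hab' : a' ≠ b') (hac' : a' ≠ c') (hbc' : b' ≠ c')
    (hstat : M.R a b c ↔ M.R a' b' c') :
    ∃ g : Equiv.Perm V, IsAut M ⇑g ∧ g a = a' ∧ g b = b' ∧ g c = c' := by
  classical
  set f₀ : V → V := fun u => if u = a then a' else if u = b then b' else if u = c then c' else u
    with hf₀
  have f₀a : f₀ a = a' := by simp [hf₀]
  have f₀b : f₀ b = b' := by simp [hf₀, Ne.symm hab]
  have f₀c : f₀ c = c' := by simp [hf₀, Ne.symm hac, Ne.symm hbc]
  have hval : ∀ x ∈ ({a, b, c} : Set V), (x = a ∧ f₀ x = a') ∨ (x = b ∧ f₀ x = b') ∨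
      (x = c ∧ f₀ x = c') := by
    rintro x hx
    simp only [Set.mem_insert_iff, Set.mem_singleton_iff] at hx
    rcases hx with rfl | rfl | rfl
    · exact Or.inl ⟨rfl, f₀a⟩
    · exact Or.inr (Or.inl ⟨rfl, f₀b⟩)
    · exact Or.inr (Or.inr ⟨rfl, f₀c⟩)
  have hmaps : ∀ x ∈ ({a, b, c} : Set V), f₀ x ∈ ({a', b', c'} : Set V) := by
    intro x hx
    rcases hval x hx with ⟨_, h⟩ | ⟨_, h⟩ | ⟨_, h⟩ <;> rw [h] <;>
      simp [Set.mem_insert_iff]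
  have hinj : ∀ x ∈ ({a, b, c} : Set V), ∀ y ∈ ({a, b, c} : Set V), f₀ x = f₀ y → x = y := by
    intro x hx y hy hxy
    rcases hval x hx with ⟨hx1, hx2⟩ | ⟨hx1, hx2⟩ | ⟨hx1, hx2⟩ <;>
      rcases hval y hy with ⟨hy1, hy2⟩ | ⟨hy1, hy2⟩ | ⟨hy1, hy2⟩ <;>
      rw [hx2, hy2] at hxy <;>
      first
        | exact hx1.trans hy1.symm
        | exact absurd hxy hab' | exact absurd hxy hac' | exact absurd hxy hbc'
        | exact absurd hxy.symm hab' | exact absurd hxy.symm hac' | exact absurd hxy.symm hbc'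
  have hiso : IsIso (tripleWM M a b c) (tripleWM M a' b' c') f₀ := by
    constructor
    · constructor
      · exact hmaps
      · exact hinj
      · intro x hx y hy z hz
        constructor
        · rintro ⟨_, _, _, h⟩
          have hd := M.irrefl _ _ _ h
          obtain ⟨ha1, hb1, hc1⟩ := mem_rev hab hac hbc hx hy hz hd.1 hd.2.1 hd.2.2
          have habc : M.R a' b' c' := hstat.mp (R_sub M h ha1 hb1 hc1 hab hac hbc)
          refine ⟨hmaps x hx, hmaps y hy, hmaps z hz, ?_⟩
          exact R_sub M habc (hmaps x hx) (hmaps y hy) (hmaps z hz)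
            (fun e => hd.1 (hinj x hx y hy e)) (fun e => hd.2.1 (hinj x hx z hz e))
            (fun e => hd.2.2 (hinj y hy z hz e))
        · rintro ⟨_, _, _, h⟩
          have hd := M.irrefl _ _ _ h
          have dxy : x ≠ y := fun e => hd.1 (congrArg f₀ e)
          have dxz : x ≠ z := fun e => hd.2.1 (congrArg f₀ e)
          have dyz : y ≠ z := fun e => hd.2.2 (congrArg f₀ e)
          obtain ⟨ha1, hb1, hc1⟩ := mem_rev hab' hac' hbc' (hmaps x hx) (hmaps y hy)
            (hmaps z hz) hd.1 hd.2.1 hd.2.2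
          have habc : M.R a b c := hstat.mpr (R_sub M h ha1 hb1 hc1 hab' hac' hbc')
          exact ⟨hx, hy, hz, R_sub M habc hx hy hz dxy dxz dyz⟩
      · intro x hx y hy z hz w hw
        rfl
    · intro u hu
      simp only [tripleWM, Set.mem_insert_iff, Set.mem_singleton_iff] at hu
      rcases hu with rfl | rfl | rfl
      · exact ⟨a, Set.mem_insert _ _, f₀a⟩
      · exact ⟨b, by simp [tripleWM], f₀b⟩
      · exact ⟨c, by simp [tripleWM], f₀c⟩
  have hfin1 : (tripleWM M a b c).carrier.Finite :=
    (Set.finite_singleton c).insert b |>.insert a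
  have hfin2 : (tripleWM M a' b' c').carrier.Finite :=
    (Set.finite_singleton c').insert b' |>.insert a'
  obtain ⟨g, hg, hgeq⟩ := hhom (tripleWM M a b c) (tripleWM M a' b' c')
    (tripleSub M hcar a b c) (tripleSub M hcar a' b' c') hfin1 hfin2 f₀ hiso
  have hbij : Function.Bijective g := by
    have h1 := hg.1
    rw [hcar] at h1
    exact Set.bijOn_univ.mp h1
  refine ⟨Equiv.ofBijective g hbij, hg, ?_, ?_, ?_⟩
  · exact (hgeq a (Set.mem_insert _ _)).trans f₀a
  · exact (hgeq b (by simp [tripleWM])).trans f₀b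
  · exact (hgeq c (by simp [tripleWM])).trans f₀c


lemma Equiv.Perm.apply_inv_self {V : Type*} (f : Equiv.Perm V) (x : V) : f (f⁻¹ x) = x :=
  Equiv.apply_symm_apply f x

/-- The key step: a permutation whose conjugation action preserves `Aut(M)` carries
collinear triples to collinear triples. -/
lemma forward_R {V : Type} (M : WM V) (hcar : M.carrier = Set.univ)
    (hembed : ∀ (W : Type) (N : WM W), N.carrier.Finite → ∃ f : W → V, IsEmb N M f)
    (hhom : ∀ A B : WM V, Sub A M → Sub B M → A.carrier.Finite → B.carrier.Finite →
      ∀ f : V → V, IsIso A B f →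
        ∃ g : V → V, IsAut M g ∧ ∀ x ∈ A.carrier, g x = f x)
    (f : Equiv.Perm V)
    (hconj : ∀ g : Equiv.Perm V, IsAut M ⇑g → IsAut M ⇑(f * g * f⁻¹)) :
    ∀ a b c : V, M.R a b c → M.R (f a) (f b) (f c) := by
  have hmem : ∀ v : V, v ∈ M.carrier := by rw [hcar]; exact fun _ => trivial
  have htrans : ∀ x y z x' y' z' : V, x ≠ y → x ≠ z → y ≠ z → x' ≠ y' → x' ≠ z' → y' ≠ z' →
      (M.R x y z ↔ M.R x' y' z') →
      (M.R (f x) (f y) (f z) ↔ M.R (f x') (f y') (f z')) := by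
    intro x y z x' y' z' d1 d2 d3 e1 e2 e3 hstat
    obtain ⟨g, hg, hga, hgb, hgc⟩ := sameOrbitPerm M hcar hhom d1 d2 d3 e1 e2 e3 hstat
    have hk := hconj g hg
    have key : ∀ u : V, (f * g * f⁻¹) (f u) = f (g u) := by
      intro u
      simp [Equiv.Perm.mul_apply]
    have h2 := hk.2.1 (f x) (hmem _) (f y) (hmem _) (f z) (hmem _)
    rw [key, key, key, hga, hgb, hgc] at h2
    exact h2
  intro a b c hR
  by_contra hno
  obtain ⟨da1, da2, da3⟩ := M.irrefl _ _ _ hR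
  obtain ⟨e, he⟩ := hembed (Fin 4) fourWM Set.finite_univ
  have hrel : ∀ i j k : Fin 4, fourWM.R i j k ↔ M.R (e i) (e j) (e k) :=
    fun i j k => he.rel i trivial j trivial k trivial
  have einj : ∀ i j : Fin 4, e i = e j → i = j := fun i j h => he.inj i trivial j trivial h
  have hR012 : M.R (e 0) (e 1) (e 2) := (hrel 0 1 2).mp R4_012
  have hn013 : ¬ M.R (e 0) (e 1) (e 3) := fun h => R4_013 ((hrel 0 1 3).mpr h)
  have hn023 : ¬ M.R (e 0) (e 2) (e 3) := fun h => R4_023 ((hrel 0 2 3).mpr h)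
  have d01 : e 0 ≠ e 1 := fun h => absurd (einj 0 1 h) (by decide)
  have d02 : e 0 ≠ e 2 := fun h => absurd (einj 0 2 h) (by decide)
  have d03 : e 0 ≠ e 3 := fun h => absurd (einj 0 3 h) (by decide)
  have d12 : e 1 ≠ e 2 := fun h => absurd (einj 1 2 h) (by decide)
  have d13 : e 1 ≠ e 3 := fun h => absurd (einj 1 3 h) (by decide)
  have d23 : e 2 ≠ e 3 := fun h => absurd (einj 2 3 h) (by decide)
  have tC : ∀ x y z : V, M.R x y z → ¬ M.R (f x) (f y) (f z) := by
    intro x y z h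
    have hd := M.irrefl _ _ _ h
    have h2 := htrans x y z a b c hd.1 hd.2.1 hd.2.2 da1 da2 da3 (iff_of_true h hR)
    exact fun h3 => hno (h2.mp h3)
  by_cases hN : ∃ x y z : V, x ≠ y ∧ x ≠ z ∧ y ≠ z ∧ ¬ M.R x y z ∧ ¬ M.R (f x) (f y) (f z)
  · obtain ⟨q1, q2, q3, e1, e2, e3, hq, hfq⟩ := hN
    have tN : ∀ x y z : V, x ≠ y → x ≠ z → y ≠ z → ¬ M.R x y z → ¬ M.R (f x) (f y) (f z) := by
      intro x y z d1 d2 d3 h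
      have h2 := htrans x y z q1 q2 q3 d1 d2 d3 e1 e2 e3 (iff_of_false h hq)
      exact fun h3 => hfq (h2.mp h3)
    have hi0 : f (f⁻¹ (e 0)) = e 0 := Equiv.Perm.apply_inv_self f (e 0)
    have hi1 : f (f⁻¹ (e 1)) = e 1 := Equiv.Perm.apply_inv_self f (e 1)
    have hi2 : f (f⁻¹ (e 2)) = e 2 := Equiv.Perm.apply_inv_self f (e 2)
    have du1 : f⁻¹ (e 0) ≠ f⁻¹ (e 1) := fun h => d01 (by rw [← hi0, ← hi1, h])
    have du2 : f⁻¹ (e 0) ≠ f⁻¹ (e 2) := fun h => d02 (by rw [← hi0, ← hi2, h])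
    have du3 : f⁻¹ (e 1) ≠ f⁻¹ (e 2) := fun h => d12 (by rw [← hi1, ← hi2, h])
    by_cases hu : M.R (f⁻¹ (e 0)) (f⁻¹ (e 1)) (f⁻¹ (e 2))
    · exact (tC _ _ _ hu) (by rw [hi0, hi1, hi2]; exact hR012)
    · exact (tN _ _ _ du1 du2 du3 hu) (by rw [hi0, hi1, hi2]; exact hR012)
  · push_neg at hN
    have h013 : M.R (f (e 0)) (f (e 1)) (f (e 3)) := hN _ _ _ d01 d03 d13 hn013
    have h023 : M.R (f (e 0)) (f (e 2)) (f (e 3)) := hN _ _ _ d02 d03 d23 hn023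
    have fd01 : f (e 0) ≠ f (e 1) := fun h => d01 (f.injective h)
    have fd02 : f (e 0) ≠ f (e 2) := fun h => d02 (f.injective h)
    have fd12 : f (e 1) ≠ f (e 2) := fun h => d12 (f.injective h)
    have h1 : M.R (f (e 0)) (f (e 3)) (f (e 1)) := (r_perm M h013).1
    have h2 : M.R (f (e 0)) (f (e 3)) (f (e 2)) := (r_perm M h023).1
    have h3 : M.R (f (e 0)) (f (e 1)) (f (e 2)) :=
      M.exchange _ _ _ _ h1 h2 _ _ _ (by simp) (by simp) (by simp) fd01 fd02 fd12
    exact tC (e 0) (e 1) (e 2) hR012 h3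

/-- a permutation of the domain of the universal homogeneous simple
∧-matroid of rank 3 which normalizes its automorphism group is itself an automorphism. -/
theorem normalizing_permutation_is_aut (V : Type) [Countable V] [Infinite V] (M : WM V)
    (hcar : M.carrier = Set.univ) (hrk : Rank3 M)
    (hembed : ∀ (W : Type) (N : WM W), N.carrier.Finite → ∃ f : W → V, IsEmb N M f)
    (hhom : ∀ A B : WM V, Sub A M → Sub B M → A.carrier.Finite → B.carrier.Finite →
      ∀ f : V → V, IsIso A B f →
        ∃ g : V → V, IsAut M g ∧ ∀ x ∈ A.carrier, g x = f x)
    (f : Equiv.Perm V)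
    (hconj : ∀ g : Equiv.Perm V, IsAut M ⇑g → IsAut M ⇑(f * g * f⁻¹))
    (hconj' : ∀ g : Equiv.Perm V, IsAut M ⇑g → IsAut M ⇑(f⁻¹ * g * f)) :
    IsAut M ⇑f := by
  have hmem : ∀ v : V, v ∈ M.carrier := by rw [hcar]; exact fun _ => trivial
  have hfwd := forward_R M hcar hembed hhom f hconj
  have hbwd : ∀ a b c : V, M.R (f a) (f b) (f c) → M.R a b c := by
    intro a b c h
    have hconj'' : ∀ g : Equiv.Perm V, IsAut M ⇑g → IsAut M ⇑(f⁻¹ * g * f⁻¹⁻¹) := by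
      intro g hg
      rw [inv_inv]
      exact hconj' g hg
    have h2 := forward_R M hcar hembed hhom f⁻¹ hconj'' (f a) (f b) (f c) h
    simpa using h2
  have hRiff : ∀ a b c : V, M.R a b c ↔ M.R (f a) (f b) (f c) :=
    fun a b c => ⟨hfwd a b c, hbwd a b c⟩
  have memline : ∀ x a b : V, f x ∈ lineOf M.R (f a) (f b) ↔ x ∈ lineOf M.R a b := by
    intro x a b
    rw [mem_lineOf, mem_lineOf, f.injective.eq_iff, f.injective.eq_iff, ← hRiff]
  have lines_iff : ∀ a b c d : V,
      (lineOf M.R a b = lineOf M.R c d ↔ lineOf M.R (f a) (f b) = lineOf M.R (f c) (f d)) := by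
    intro a b c d
    constructor
    · intro h
      ext v
      conv_lhs => rw [← Equiv.Perm.apply_inv_self f v]
      conv_rhs => rw [← Equiv.Perm.apply_inv_self f v]
      rw [memline, memline, h]
    · intro h
      ext v
      rw [← memline v a b, ← memline v c d, h]
  have hwedge : ∀ a b c d : V, f (M.wedge a b c d) = M.wedge (f a) (f b) (f c) (f d) := by
    intro a b c d
    rcases M.wedge_det a b c d (hmem _) (hmem _) (hmem _) (hmem _) with
      ⟨hab, hcd, hne, h1, h2, h3⟩ | ⟨heq, hnot⟩
    · rcases M.wedge_det (f a) (f b) (f c) (f d) (hmem _) (hmem _) (hmem _) (hmem _) with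
        ⟨hab', hcd', hne', h1', h2', h3'⟩ | ⟨heq', hnot'⟩
      · by_contra hne2
        exact hne' (line_unique M hab' hcd' (fun h => hne2 h.symm) h1'
          ((memline _ a b).mpr h1) h2' ((memline _ c d).mpr h2))
      · exfalso
        apply hnot'
        refine ⟨f (M.wedge a b c d), fun h => hab (f.injective h), fun h => hcd (f.injective h),
          fun h => hne ((lines_iff a b c d).mpr h),
          (memline _ a b).mpr h1, (memline _ c d).mpr h2, ?_⟩
        simp only [Set.mem_insert_iff, Set.mem_singleton_iff, not_or] at h3 ⊢
        exact ⟨fun h => h3.1 (f.injective h), fun h => h3.2.1 (f.injective h),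
          fun h => h3.2.2.1 (f.injective h), fun h => h3.2.2.2 (f.injective h)⟩
    · rcases M.wedge_det (f a) (f b) (f c) (f d) (hmem _) (hmem _) (hmem _) (hmem _) with
        ⟨hab', hcd', hne', h1', h2', h3'⟩ | ⟨heq', _⟩
      · exfalso
        apply hnot
        refine ⟨f⁻¹ (M.wedge (f a) (f b) (f c) (f d)),
          fun h => hab' (congrArg f h), fun h => hcd' (congrArg f h),
          fun h => hne' ((lines_iff a b c d).mp h),
          (memline _ a b).mp (by rw [Equiv.Perm.apply_inv_self]; exact h1'),
          (memline _ c d).mp (by rw [Equiv.Perm.apply_inv_self]; exact h2'), ?_⟩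
        simp only [Set.mem_insert_iff, Set.mem_singleton_iff, not_or] at h3' ⊢
        exact ⟨fun h => h3'.1 ((Equiv.Perm.apply_inv_self f _).symm.trans (congrArg f h)),
          fun h => h3'.2.1 ((Equiv.Perm.apply_inv_self f _).symm.trans (congrArg f h)),
          fun h => h3'.2.2.1 ((Equiv.Perm.apply_inv_self f _).symm.trans (congrArg f h)),
          fun h => h3'.2.2.2 ((Equiv.Perm.apply_inv_self f _).symm.trans (congrArg f h))⟩
      · rw [heq, heq']
  refine ⟨?_, fun a _ b _ c _ => hRiff a b c, fun a _ b _ c _ d _ => hwedge a b c d⟩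
  rw [hcar]
  exact f.bijective.bijOn_univ
end PaoliniMatroids
end

section
/- Given a simple matroid (V,R) of rank ≤ 3, the incidence system P_M whose points are the elements of V and whose lines are the sets of the form {a,b} ∪ {c ∈ V : R a b c} for distinct a, b ∈ V, with incidence given by membership, is a linear space: every pair of distinct points lies on a unique line, every pair of distinct lines intersects in at most one point, and every line contains at least two points. -/
namespace PaoliniMatroids

open Function Set

/-- A simple matroid of rank ≤ 3, given by its ternary dependency relation only:
irreflexive, symmetric, and satisfying the exchange axiom. -/
def IsSM {V : Type*} (R : V → V → V → Prop) : Prop :=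
  (∀ a b c, R a b c → a ≠ b ∧ a ≠ c ∧ b ≠ c) ∧
  (∀ a b c, R a b c → R b a c) ∧
  (∀ a b c, R a b c → R b c a) ∧
  (∀ a b c d, R a b c → R a b d → ∀ x y z,
      x ∈ ({a, b, c, d} : Set V) → y ∈ ({a, b, c, d} : Set V) →
      z ∈ ({a, b, c, d} : Set V) → x ≠ y → x ≠ z → y ≠ z → R x y z)

section Aux

variable {V : Type} {R : V → V → V → Prop}

lemma mem_lineOf_iff {a b x : V} : x ∈ lineOf R a b ↔ x = a ∨ x = b ∨ R a b x := by
  simp [lineOf, or_assoc]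

lemma IsSM.perm_acb (h : IsSM R) {a b c : V} (hr : R a b c) : R a c b :=
  h.2.1 _ _ _ (h.2.2.1 _ _ _ (h.2.2.1 _ _ _ hr))

lemma IsSM.perm_bac (h : IsSM R) {a b c : V} (hr : R a b c) : R b a c :=
  h.2.1 _ _ _ hr

lemma lineOf_symm (h : IsSM R) (a b : V) : lineOf R a b = lineOf R b a := by
  ext x
  simp only [mem_lineOf_iff]
  constructor
  · rintro (h1 | h1 | h1)
    · exact Or.inr (Or.inl h1)
    · exact Or.inl h1
    · exact Or.inr (Or.inr (h.perm_bac h1))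
  · rintro (h1 | h1 | h1)
    · exact Or.inr (Or.inl h1)
    · exact Or.inl h1
    · exact Or.inr (Or.inr (h.perm_bac h1))

lemma lineOf_subset (h : IsSM R) {a b c : V} (hr : R a b c) :
    lineOf R a b ⊆ lineOf R a c := by
  classical
  obtain ⟨hab, hac, hbc⟩ := h.1 _ _ _ hr
  intro x hx
  rw [mem_lineOf_iff] at hx ⊢
  rcases hx with rfl | rfl | hx
  · exact Or.inl rfl
  · exact Or.inr (Or.inr (h.perm_acb hr))
  · by_cases hxc : x = c
    · exact Or.inr (Or.inl hxc)
    · obtain ⟨_, hax, _⟩ := h.1 _ _ _ hx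
      refine Or.inr (Or.inr (h.2.2.2 a b c x hr hx a c x ?_ ?_ ?_ hac hax (fun e => hxc e.symm)))
      · simp
      · simp
      · simp

lemma lineOf_eq_of_R (h : IsSM R) {a b c : V} (hr : R a b c) :
    lineOf R a b = lineOf R a c :=
  (lineOf_subset h hr).antisymm (lineOf_subset h (h.perm_acb hr))

lemma lineOf_eq (h : IsSM R) {a b p q : V} (hpq : p ≠ q)
    (hp : p ∈ lineOf R a b) (hq : q ∈ lineOf R a b) :
    lineOf R p q = lineOf R a b := by
  rw [mem_lineOf_iff] at hp hq
  rcases hp with rfl | rfl | hp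
  · -- p = a
    rcases hq with rfl | rfl | hq
    · exact absurd rfl hpq
    · rfl
    · exact (lineOf_eq_of_R h hq).symm
  · -- p = b
    rcases hq with rfl | rfl | hq
    · exact lineOf_symm h p q
    · exact absurd rfl hpq
    · rw [lineOf_symm h a p]
      exact (lineOf_eq_of_R h (h.perm_bac hq)).symm
  · -- R a b p
    have h1 : lineOf R a b = lineOf R a p := lineOf_eq_of_R h hp
    rcases hq with rfl | rfl | hq
    · rw [h1, lineOf_symm h q p]
    · rw [lineOf_symm h p q, lineOf_symm h a q]
      exact (lineOf_eq_of_R h (h.perm_bac hp)).symm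
    · obtain ⟨hab, hap, hbp⟩ := h.1 _ _ _ hp
      obtain ⟨_, haq, hbq⟩ := h.1 _ _ _ hq
      have hpaq : R p a q := by
        refine h.2.2.2 a b p q hp hq p a q ?_ ?_ ?_ (Ne.symm hap) hpq haq <;> simp
      rw [h1, lineOf_symm h a p, lineOf_eq_of_R h hpaq]

end Aux

/-- the points and lines of a simple matroid of rank ≤ 3 form a linear
space: two distinct points lie on a unique line, two distinct lines meet in at most one
point, and every line has at least two points. -/
theorem matroid_gives_linear_space (V : Type) (R : V → V → V → Prop) (h : IsSM R) :
    (∀ p q : V, p ≠ q →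
      ∃! ℓ : Set V, (∃ a b : V, a ≠ b ∧ ℓ = lineOf R a b) ∧ p ∈ ℓ ∧ q ∈ ℓ) ∧
    (∀ ℓ₁ ℓ₂ : Set V, (∃ a b : V, a ≠ b ∧ ℓ₁ = lineOf R a b) →
      (∃ a b : V, a ≠ b ∧ ℓ₂ = lineOf R a b) → ℓ₁ ≠ ℓ₂ → (ℓ₁ ∩ ℓ₂).Subsingleton) ∧
    (∀ ℓ : Set V, (∃ a b : V, a ≠ b ∧ ℓ = lineOf R a b) →
      ∃ u v : V, u ≠ v ∧ u ∈ ℓ ∧ v ∈ ℓ) := by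
  refine ⟨?_, ?_, ?_⟩
  · intro p q hpq
    refine ⟨lineOf R p q, ⟨⟨p, q, hpq, rfl⟩, ?_, ?_⟩, ?_⟩
    · exact mem_lineOf_iff.mpr (Or.inl rfl)
    · exact mem_lineOf_iff.mpr (Or.inr (Or.inl rfl))
    · rintro ℓ ⟨⟨a, b, hab, rfl⟩, hp, hq⟩
      exact (lineOf_eq h hpq hp hq).symm
  · rintro ℓ₁ ℓ₂ ⟨a, b, hab, rfl⟩ ⟨c, d, hcd, rfl⟩ hne x hx y hy
    by_contra hxy
    have h1 := lineOf_eq h hxy hx.1 hy.1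
    have h2 := lineOf_eq h hxy hx.2 hy.2
    exact hne (h1 ▸ h2)
  · rintro ℓ ⟨a, b, hab, rfl⟩
    exact ⟨a, b, hab, mem_lineOf_iff.mpr (Or.inl rfl),
      mem_lineOf_iff.mpr (Or.inr (Or.inl rfl))⟩
end PaoliniMatroids
end
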